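/- Fix d = 2m, a real matrix A, and a time-symmetric second-order real basic method S for A which in addition is symplectic: S(z)ᵀ·J·S(z) = J for all z ∈ ℂ, where J is the canonical symplectic 2m×2m matrix. Let n ≥ 2 and let α_1, …, α_s ∈ ℂ be left-right palindromic (α_{s+1−j} = α_j) with α_1 + ⋯ + α_s = 1, and suppose the composition P(h) = S(α_s h)⋯S(α_1 h) satisfies (fun h : ℝ => P(h) − exp(h·A)) = O(h^{2n+1}) as h → 0. Let R(h) be the entrywise real part of P(h). Then R is pseudo-symplectic of order 4n+1, i.e. (fun h : ℝ => R(h)ᵀ·J·R(h) − J) is O(h^{4n+2}) as h → 0. -/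

import Mathlib

/-!
Write `P = X + iY` with `X = Re P` and `Y = Im P`. Taking real parts in the exact
symplecticity `Pᵀ J P = J` of the composition gives `Xᵀ J X - J = Yᵀ J Y`. Since
`exp (h A)` is real, `Y` is dominated by the error `P h - exp (h A) = O(h^(2n+1))`,
so the symplecticity defect of `X` is quadratic in it, i.e. `O(h^(4n+2))`.
-/

open Matrix Asymptotics Filter NormedSpace

attribute [local instance] Matrix.normedAddCommGroup Matrix.normedSpace

/-- The canonical symplectic matrix `J = [[0, 1], [-1, 0]]` on `ℝ^(m+m)`. -/
noncomputable def canonicalJ (m : ℕ) : Matrix (Fin (m + m)) (Fin (m + m)) ℝ :=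
  (Matrix.fromBlocks 0 1 (-1) 0).submatrix finSumFinEquiv.symm finSumFinEquiv.symm

section

variable {ι : Type*} [Fintype ι]

def symplecticMonoid [DecidableEq ι] {R : Type*} [CommRing R] (J : Matrix ι ι R) :
    Submonoid (Matrix ι ι R) where
  carrier := {M | Mᵀ * J * M = J}
  one_mem' := by simp
  mul_mem' {M N} hM hN := by
    change Mᵀ * J * M = J at hM
    change (M * N)ᵀ * J * (M * N) = J
    calc (M * N)ᵀ * J * (M * N) = Nᵀ * (Mᵀ * J * M) * N := by
          simp only [transpose_mul, Matrix.mul_assoc]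
      _ = J := by rw [hM, hN]

theorem re_transpose_mul_mul (P : Matrix ι ι ℂ) (J : Matrix ι ι ℝ) :
    (Pᵀ * J.map Complex.ofReal * P).map Complex.re
      = (P.map Complex.re)ᵀ * J * P.map Complex.re
        - (P.map Complex.im)ᵀ * J * P.map Complex.im := by
  ext i j
  simp [Matrix.mul_apply, Complex.re_sum, Complex.mul_re, Complex.mul_im, Finset.sum_mul,
    ← Finset.sum_sub_distrib]

theorem Asymptotics.IsBigO.map_im {α κ : Type*} [Fintype κ] {l : Filter α}
    {f : α → Matrix ι κ ℂ} {F : α → Matrix ι κ ℝ} {g : α → ℝ}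
    (h : (fun x => f x - (F x).map Complex.ofReal) =O[l] g) :
    (fun x => (f x).map Complex.im) =O[l] g := by
  refine (isBigO_of_le _ fun x => ?_).trans h
  refine (Matrix.norm_le_iff (norm_nonneg _)).2 fun i j => ?_
  calc ‖(f x).map Complex.im i j‖ = ‖((f x - (F x).map Complex.ofReal) i j).im‖ := by simp
    _ ≤ ‖(f x - (F x).map Complex.ofReal) i j‖ := Complex.abs_im_le_norm _
    _ ≤ _ := Matrix.norm_entry_le_entrywise_sup_norm _

theorem Asymptotics.IsBigO.transpose_mul_mul {α 𝕜 : Type*} [NormedCommRing 𝕜] {l : Filter α}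
    {Y : α → Matrix ι ι 𝕜} {g : α → ℝ} (hY : Y =O[l] g) (J : Matrix ι ι 𝕜) :
    (fun x => (Y x)ᵀ * J * Y x) =O[l] fun x => g x * g x := by
  have hentry : ∀ i j, (fun x => Y x i j) =O[l] g := fun i j =>
    isBigO_pi.1 (isBigO_pi.1 hY i) j
  refine isBigO_pi.2 fun i => isBigO_pi.2 fun j => ?_
  simp_rw [Matrix.mul_assoc, Matrix.mul_apply, Matrix.transpose_apply]
  exact IsBigO.fun_sum fun k _ =>
    (hentry k i).mul (IsBigO.fun_sum fun l _ => (hentry l j).const_mul_left (J k l))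

section
attribute [local instance] Matrix.linftyOpNormedRing Matrix.linftyOpNormedAlgebra

-- `map_exp` needs a normed algebra; the `ℓ∞` operator norm induces the usual topology.
theorem exp_map_ofReal [DecidableEq ι] (M : Matrix ι ι ℝ) :
    exp (M.map Complex.ofReal) = (exp M).map Complex.ofReal := by
  have : @CompleteSpace (Matrix ι ι ℝ) Matrix.linftyOpNormedRing.toUniformSpace :=
    FiniteDimensional.complete ℝ _
  exact (map_exp (Complex.ofRealHom.mapMatrix (m := ι))
    (continuous_id.matrix_map Complex.continuous_ofReal) M).symm

end

end

theorem palindromic_real_part_pseudo_symplectic_general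
    (m s n : ℕ) (A : Matrix (Fin (m + m)) (Fin (m + m)) ℝ)
    (S : ℂ → Matrix (Fin (m + m)) (Fin (m + m)) ℂ)
    -- `S` is symplectic
    (hSymp : ∀ z : ℂ, (S z)ᵀ * (canonicalJ m).map Complex.ofReal * S z
      = (canonicalJ m).map Complex.ofReal)
    -- left-right palindromic coefficients with `∑ α_j = 1`
    (α : Fin s → ℂ)
    -- the composition `P h = S (α_s h) ⋯ S (α_1 h)`
    (P : ℝ → Matrix (Fin (m + m)) (Fin (m + m)) ℂ)
    (hP : ∀ h : ℝ, P h = ((List.ofFn fun j : Fin s => S (α j * (h : ℂ))).reverse).prod)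
    -- ... is of order `2n`
    (hPord : (fun h : ℝ => P h - NormedSpace.exp ((h : ℂ) • A.map Complex.ofReal))
      =O[nhds 0] fun h : ℝ => h ^ (2 * n + 1))
    -- `R h` is the entrywise real part of `P h`
    (R : ℝ → Matrix (Fin (m + m)) (Fin (m + m)) ℝ)
    (hR : ∀ h : ℝ, R h = (P h).map Complex.re) :
    (fun h : ℝ => (R h)ᵀ * canonicalJ m * R h - canonicalJ m)
      =O[nhds 0] fun h : ℝ => h ^ (4 * n + 2) := by
  set J := canonicalJ m
  have hPsymp : ∀ h, P h ∈ symplecticMonoid (J.map Complex.ofReal) := fun h => by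
    rw [hP h]
    refine list_prod_mem fun M hM => ?_
    obtain ⟨j, rfl⟩ := List.mem_ofFn.1 (List.mem_reverse.1 hM)
    exact hSymp _
  have hdefect : ∀ h, (R h)ᵀ * J * R h - J = ((P h).map Complex.im)ᵀ * J * (P h).map Complex.im :=
    fun h => by
      have := congrArg (Matrix.map · Complex.re) (hPsymp h)
      simp only [re_transpose_mul_mul, Matrix.map_map, Function.comp_def, Complex.ofReal_re,
        Matrix.map_id'] at this
      rw [hR h, sub_eq_iff_eq_add', ← sub_eq_iff_eq_add]
      exact this
  have hIm : (fun h : ℝ => (P h).map Complex.im) =O[nhds 0] fun h : ℝ => h ^ (2 * n + 1) := by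
    refine IsBigO.map_im (F := fun h : ℝ => exp (h • A)) ?_
    simpa [← exp_map_ofReal, Matrix.map_smul] using hPord
  have hpow : ∀ h : ℝ, h ^ (2 * n + 1) * h ^ (2 * n + 1) = h ^ (4 * n + 2) := fun h => by ring
  simpa only [hdefect, hpow] using hIm.transpose_mul_mul J

/-- Proposition 1 of the paper, linear/matrix form, symplecticity part:
the real part of a left-right palindromic composition of order `2n` of a
time-symmetric second-order real symplectic basic method is pseudo-symplectic
of order `4n+1`. -/
theorem palindromic_real_part_pseudo_symplectic
    (m s n : ℕ) (hn : 2 ≤ n)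
    (A : Matrix (Fin (m + m)) (Fin (m + m)) ℝ)
    (S : ℂ → Matrix (Fin (m + m)) (Fin (m + m)) ℂ)
    -- `S` is analytic
    (hAnal : ∀ z : ℂ, AnalyticAt ℂ S z)
    -- `S` is time-symmetric
    (hTS : ∀ z : ℂ, S z * S (-z) = 1)
    -- `S` is real
    (hReal : ∀ z : ℂ, (S z).map (starRingEnd ℂ) = S (starRingEnd ℂ z))
    -- `S` is a second-order approximation of `exp (h A)`
    (hOrd2 : (fun h : ℝ => S (h : ℂ) - NormedSpace.exp ((h : ℂ) • A.map Complex.ofReal))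
      =O[nhds 0] fun h : ℝ => h ^ 3)
    -- `S` is symplectic
    (hSymp : ∀ z : ℂ, (S z)ᵀ * (canonicalJ m).map Complex.ofReal * S z
      = (canonicalJ m).map Complex.ofReal)
    -- left-right palindromic coefficients with `∑ α_j = 1`
    (α : Fin s → ℂ)
    (hpal : ∀ j : Fin s, α (Fin.rev j) = α j)
    (hsum : ∑ j, α j = 1)
    -- the composition `P h = S (α_s h) ⋯ S (α_1 h)`
    (P : ℝ → Matrix (Fin (m + m)) (Fin (m + m)) ℂ)
    (hP : ∀ h : ℝ, P h = ((List.ofFn fun j : Fin s => S (α j * (h : ℂ))).reverse).prod)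
    -- ... is of order `2n`
    (hPord : (fun h : ℝ => P h - NormedSpace.exp ((h : ℂ) • A.map Complex.ofReal))
      =O[nhds 0] fun h : ℝ => h ^ (2 * n + 1))
    -- `R h` is the entrywise real part of `P h`
    (R : ℝ → Matrix (Fin (m + m)) (Fin (m + m)) ℝ)
    (hR : ∀ h : ℝ, R h = (P h).map Complex.re) :
    (fun h : ℝ => (R h)ᵀ * canonicalJ m * R h - canonicalJ m)
      =O[nhds 0] fun h : ℝ => h ^ (4 * n + 2) :=
  palindromic_real_part_pseudo_symplectic_general m s n A S hSymp α P hP hPord R hR
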